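/- arXiv:0705.2499 — 3 statements merged into one kernel-verified Lean document; each statement's English description precedes it below -/
import Mathlib

section
/- Let D be a compact subset of R^d and let n(D) be the largest number of points in D that are pairwise at distance at least 1 from each other. If ρ is a finite nonnegative measure on D with total mass V, and F(ρ) = ∫∫ U(x−y) dρ(x) dρ(y) where U(r) = 1 if |r| ≤ 1 and 0 otherwise, then F(ρ) ≥ V²/n(D). -/
/-! Write `f x = ρ (closedBall x 1)`, so that `F(ρ) = ∫ f dρ`. Since the kernel `dist x y ≤ 1` is
symmetric, Tonelli gives `∫ (∫_{closedBall x 1} f dρ) dρ(x) = ∫ f² dρ`, so some `x ∈ D` has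
`f(x)² ≤ ∫_{closedBall x 1} f dρ`. Removing `B = closedBall x 1` from `D` lowers the packing
number by one, and with `a = ρ B`, `b = ρ Bᶜ` induction on `n` gives
`V²/(n + 1) = (a + b)²/(1 + n) ≤ a² + b²/n ≤ ∫_B f dρ + ∫_{Bᶜ} f dρ = F(ρ)`. -/

open MeasureTheory Metric
open scoped ENNReal

noncomputable section

/-- `packingNumber D n`: `n` is the largest number of points of `D` that are
pairwise at distance at least 1 from each other. -/
def packingNumber {X : Type*} [MetricSpace X] (D : Set X) (n : ℕ) : Prop :=
  IsGreatest {k | ∃ s : Finset X, ↑s ⊆ D ∧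
    (∀ x ∈ s, ∀ y ∈ s, x ≠ y → 1 ≤ dist x y) ∧ s.card = k} n

/-- `F ρ = ∫∫ U(x - y) dρ(x) dρ(y)` with `U` the indicator of the closed unit ball. -/
def Fen {d : ℕ} (ρ : Measure (EuclideanSpace ℝ (Fin d))) : ℝ≥0∞ :=
  ∫⁻ x, ∫⁻ y, (if dist x y ≤ 1 then 1 else 0) ∂ρ ∂ρ

namespace ENNReal

theorem two_mul_le_add_sq (a b : ℝ≥0∞) : 2 * a * b ≤ a ^ 2 + b ^ 2 := by
  rcases eq_or_ne a ⊤ with rfl | ha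
  · simp
  rcases eq_or_ne b ⊤ with rfl | hb
  · simp
  lift a to NNReal using ha
  lift b to NNReal using hb
  exact_mod_cast _root_.two_mul_le_add_sq a b

theorem add_sq_div_one_add_le (a b q : ℝ≥0∞) : (a + b) ^ 2 / (1 + q) ≤ a ^ 2 + b ^ 2 / q := by
  rcases eq_or_ne q 0 with rfl | hq0
  · rcases eq_or_ne b 0 with rfl | hb
    · simp
    · simp [ENNReal.div_zero (pow_ne_zero 2 hb)]
  rcases eq_or_ne q ⊤ with rfl | hqt
  · simp
  refine ENNReal.div_le_of_le_mul' ?_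
  obtain ⟨c, rfl⟩ : ∃ c, b = q * c := ⟨b / q, (ENNReal.mul_div_cancel hq0 hqt).symm⟩
  have hsq : (q * c) ^ 2 / q = q * c ^ 2 := by
    rw [mul_pow, sq q, mul_assoc, mul_comm q, ENNReal.mul_div_cancel_right hq0 hqt]
  rw [hsq]
  calc (a + q * c) ^ 2 = a ^ 2 + q * (2 * a * c) + q ^ 2 * c ^ 2 := by ring
    _ ≤ a ^ 2 + q * (a ^ 2 + c ^ 2) + q ^ 2 * c ^ 2 := by gcongr; exact two_mul_le_add_sq a c
    _ = (1 + q) * (a ^ 2 + q * c ^ 2) := by ring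

end ENNReal

section MeasureOfBalls

open Set

variable {X : Type*} [PseudoMetricSpace X]

def PackingNumberLE (D : Set X) (r : ℝ) (n : ℕ) : Prop :=
  ∀ s : Finset X, ↑s ⊆ D → (s : Set X).Pairwise (fun x y => r ≤ dist x y) → s.card ≤ n

theorem PackingNumberLE.diff_closedBall {D : Set X} {r : ℝ} {n : ℕ} {x : X}
    (h : PackingNumberLE D r (n + 1)) (hr : 0 ≤ r) (hx : x ∈ D) :
    PackingNumberLE (D \ closedBall x r) r n := by
  classical
  intro s hs hsep
  have hxs : x ∉ s := fun hmem => (hs hmem).2 (mem_closedBall_self hr)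
  have hfar : ∀ y ∈ (s : Set X), x ≠ y → r ≤ dist x y ∧ r ≤ dist y x := fun y hy _ =>
    have hyx : r ≤ dist y x := (lt_of_not_ge (hs hy).2).le
    ⟨hyx.trans_eq (dist_comm y x), hyx⟩
  have := h (insert x s) (by simpa using insert_subset hx (hs.trans sdiff_subset))
    (by simpa using pairwise_insert.2 ⟨hsep, hfar⟩)
  rwa [Finset.card_insert_of_notMem hxs, Nat.add_le_add_iff_right] at this

variable [MeasurableSpace X] [OpensMeasurableSpace X] [SecondCountableTopology X]
  {ρ : Measure X}

theorem measurable_measure_closedBall [SFinite ρ] (r : ℝ) :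
    Measurable fun x => ρ (closedBall x r) :=
  measurable_measure_prodMk_left
    (isClosed_le (continuous_snd.dist continuous_fst) continuous_const).measurableSet

theorem lintegral_setLIntegral_measure_closedBall [SFinite ρ] (r : ℝ) :
    ∫⁻ x, ∫⁻ y in closedBall x r, ρ (closedBall y r) ∂ρ ∂ρ
      = ∫⁻ x, ρ (closedBall x r) ^ 2 ∂ρ := by
  set f := fun x => ρ (closedBall x r)
  have hf : Measurable f := measurable_measure_closedBall r
  have hsymm : ∀ x y,
      (closedBall x r).indicator f y = (closedBall y r).indicator (fun _ => f y) x := fun x y => by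
    simp only [indicator, mem_closedBall, dist_comm]
  calc ∫⁻ x, ∫⁻ y in closedBall x r, f y ∂ρ ∂ρ
      = ∫⁻ x, ∫⁻ y, (closedBall x r).indicator f y ∂ρ ∂ρ := by
        simp only [lintegral_indicator measurableSet_closedBall]
    _ = ∫⁻ y, ∫⁻ x, (closedBall x r).indicator f y ∂ρ ∂ρ :=
        lintegral_lintegral_swap <| Measurable.aemeasurable <| (hf.comp measurable_snd).indicator
          (isClosed_le (continuous_snd.dist continuous_fst) continuous_const).measurableSet
    _ = ∫⁻ x, f x ^ 2 ∂ρ := by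
        simp only [hsymm, lintegral_indicator_const measurableSet_closedBall, sq]
        rfl

theorem exists_mem_sq_measure_closedBall_le [IsFiniteMeasure ρ] {D : Set X} (hρ : ρ ≠ 0)
    (hD : ρ Dᶜ = 0) (r : ℝ) :
    ∃ x ∈ D, ρ (closedBall x r) ^ 2 ≤ ∫⁻ y in closedBall x r, ρ (closedBall y r) ∂ρ := by
  by_contra! h
  have hlt : ∀ᵐ x ∂ρ, ∫⁻ y in closedBall x r, ρ (closedBall y r) ∂ρ < ρ (closedBall x r) ^ 2 :=
    measure_mono_null (fun x hx hxD => hx (h x hxD)) hD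
  have hfin : ∫⁻ x, ρ (closedBall x r) ^ 2 ∂ρ ≠ ∞ := by
    refine ne_top_of_le_ne_top (b := ∫⁻ _, ρ univ ^ 2 ∂ρ) ?_
      (lintegral_mono fun x => by gcongr; exact subset_univ _)
    simp [ENNReal.mul_ne_top, measure_ne_top]
  refine (lintegral_strict_mono hρ ((measurable_measure_closedBall r).pow_const 2).aemeasurable
    ?_ hlt).ne (lintegral_setLIntegral_measure_closedBall r)
  rwa [lintegral_setLIntegral_measure_closedBall]

theorem measure_univ_sq_div_le_lintegral_measure_closedBall {r : ℝ} (hr : 0 ≤ r) {n : ℕ}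
    {D : Set X} (hn : PackingNumberLE D r n) [IsFiniteMeasure ρ] (hD : ρ Dᶜ = 0) :
    ρ univ ^ 2 / n ≤ ∫⁻ x, ρ (closedBall x r) ∂ρ := by
  induction n generalizing ρ D with
  | zero =>
    rcases eq_or_ne ρ 0 with rfl | hρ
    · simp
    obtain ⟨x, hxD, -⟩ := exists_mem_sq_measure_closedBall_le hρ hD r
    simpa using hn {x} (by simpa using hxD) (by simp)
  | succ n ih =>
    rcases eq_or_ne ρ 0 with rfl | hρ
    · simp
    obtain ⟨x, hxD, hx⟩ := exists_mem_sq_measure_closedBall_le hρ hD r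
    set B := closedBall x r
    have hB : MeasurableSet B := measurableSet_closedBall
    have hrest : ρ.restrict Bᶜ (D \ B)ᶜ = 0 := by
      rw [Measure.restrict_apply' hB.compl]
      exact measure_mono_null (fun y hy hyD => hy.1 ⟨hyD, hy.2⟩) hD
    have ih' := ih (hn.diff_closedBall hr hxD) hrest
    rw [Measure.restrict_apply_univ] at ih'
    calc ρ univ ^ 2 / (n + 1 : ℕ) = (ρ B + ρ Bᶜ) ^ 2 / (1 + n) := by
          rw [measure_add_measure_compl hB, Nat.cast_succ, add_comm (n : ℝ≥0∞)]
      _ ≤ ρ B ^ 2 + ρ Bᶜ ^ 2 / n := ENNReal.add_sq_div_one_add_le _ _ _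
      _ ≤ ∫⁻ y in B, ρ (closedBall y r) ∂ρ + ∫⁻ y in Bᶜ, ρ.restrict Bᶜ (closedBall y r) ∂ρ :=
          add_le_add hx ih'
      _ ≤ ∫⁻ y in B, ρ (closedBall y r) ∂ρ + ∫⁻ y in Bᶜ, ρ (closedBall y r) ∂ρ := by
          gcongr with y
          exact Measure.restrict_le_self
      _ = ∫⁻ y, ρ (closedBall y r) ∂ρ := lintegral_add_compl _ hB

end MeasureOfBalls

theorem Fen_eq_lintegral_measure_closedBall {d : ℕ} (ρ : Measure (EuclideanSpace ℝ (Fin d))) :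
    Fen ρ = ∫⁻ x, ρ (closedBall x 1) ∂ρ := by
  refine lintegral_congr fun x => ?_
  rw [← lintegral_indicator_one measurableSet_closedBall]
  refine lintegral_congr fun y => ?_
  simp only [Set.indicator, mem_closedBall, dist_comm y x, Pi.one_apply]

theorem stmt0_general {d : ℕ} (D : Set (EuclideanSpace ℝ (Fin d)))
    (n : ℕ) (hn : packingNumber D n)
    (ρ : Measure (EuclideanSpace ℝ (Fin d))) [IsFiniteMeasure ρ]
    (hsupp : ρ Dᶜ = 0) (V : ℝ≥0∞) (hV : ρ Set.univ = V) :
    V ^ 2 / n ≤ Fen ρ := by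
  rw [← hV, Fen_eq_lintegral_measure_closedBall]
  exact measure_univ_sq_div_le_lintegral_measure_closedBall zero_le_one
    (fun s hsD hsep => hn.2 ⟨s, hsD, hsep, rfl⟩) hsupp

theorem stmt0 {d : ℕ} (D : Set (EuclideanSpace ℝ (Fin d))) (hD : IsCompact D)
    (n : ℕ) (hn : packingNumber D n)
    (ρ : Measure (EuclideanSpace ℝ (Fin d))) [IsFiniteMeasure ρ]
    (hsupp : ρ Dᶜ = 0) (V : ℝ≥0∞) (hV : ρ Set.univ = V) :
    V ^ 2 / n ≤ Fen ρ :=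
  stmt0_general D n hn ρ hsupp V hV
end
end

section
/- Let u : [a,b] → R be a C¹ function with u(a) = u(b) = 0. Then ∫_a^b |u'(x)|² dx ≥ (π²/(b−a)²) ∫_a^b |u(x)|² dx. -/
/-!
If `S > 0` solves `S'' = -k S` on `[a, b]`, then `φ = S' / S` solves the Riccati equation
`φ' = -(k + φ²)`, and Picone's identity `u'² - k u² = (u' - φ u)² + (φ u²)'` integrates, since
`u` vanishes at both endpoints, to `k ∫ u² ≤ ∫ u'²`. For every `L > b - a` the function
`cos (π (x - m) / L)`, `m` the midpoint of `[a, b]`, is such an `S` with `k = π² / L²`; letting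
`L → b - a` gives the sharp constant.
-/

open intervalIntegral

open Real Set Filter Topology MeasureTheory

theorem hasDerivAt_div_of_harmonic {S S' : ℝ → ℝ} {k x : ℝ} (hS : HasDerivAt S (S' x) x)
    (hS' : HasDerivAt S' (-k * S x) x) (hx : S x ≠ 0) :
    HasDerivAt (fun y => S' y / S y) (-(k + (S' x / S x) ^ 2)) x := by
  refine (hS'.div hS hx).congr_deriv ?_
  field_simp
  ring

section Picone

variable {a b k : ℝ} {u u' : ℝ → ℝ}

theorem mul_integral_sq_le_integral_sq_deriv_of_riccati (hab : a ≤ b)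
    (hu : ContinuousOn u (Icc a b)) (hu' : ∀ x ∈ Ioo a b, HasDerivAt u (u' x) x)
    (hu'2 : IntervalIntegrable (fun x => u' x ^ 2) volume a b) (ha : u a = 0) (hb : u b = 0)
    {φ : ℝ → ℝ} (hφ : ContinuousOn φ (Icc a b))
    (hφ' : ∀ x ∈ Ioo a b, HasDerivAt φ (-(k + φ x ^ 2)) x) :
    k * ∫ x in a..b, u x ^ 2 ≤ ∫ x in a..b, u' x ^ 2 := by
  have hu2 : IntervalIntegrable (fun x => u x ^ 2) volume a b :=
    (hu.pow 2).intervalIntegrable_of_Icc hab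
  have hint := hu'2.sub (hu2.const_mul k)
  have key : φ b * u b ^ 2 - φ a * u a ^ 2 ≤ ∫ x in a..b, (u' x ^ 2 - k * u x ^ 2) := by
    refine sub_le_integral_of_hasDeriv_right_of_le hab (hφ.mul (hu.pow 2))
      (fun x hx => ((hφ' x hx).mul ((hu' x hx).fun_pow 2)).hasDerivWithinAt)
      ((intervalIntegrable_iff_integrableOn_Icc_of_le hab).1 hint) fun x _ => ?_
    simp only [Nat.reduceSub, pow_one, Nat.cast_ofNat]
    nlinarith [sq_nonneg (u' x - φ x * u x)]
  rw [ha, hb, integral_sub hu'2 (hu2.const_mul k), intervalIntegral.integral_const_mul] at key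
  linarith

theorem mul_integral_sq_le_integral_sq_deriv_of_pos_harmonic (hab : a ≤ b)
    (hu : ContinuousOn u (Icc a b)) (hu' : ∀ x ∈ Ioo a b, HasDerivAt u (u' x) x)
    (hu'2 : IntervalIntegrable (fun x => u' x ^ 2) volume a b) (ha : u a = 0) (hb : u b = 0)
    {S S' : ℝ → ℝ} (hS : ∀ x ∈ Icc a b, HasDerivAt S (S' x) x)
    (hS' : ∀ x ∈ Icc a b, HasDerivAt S' (-k * S x) x) (hS_pos : ∀ x ∈ Icc a b, 0 < S x) :
    k * ∫ x in a..b, u x ^ 2 ≤ ∫ x in a..b, u' x ^ 2 :=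
  mul_integral_sq_le_integral_sq_deriv_of_riccati hab hu hu' hu'2 ha hb
    (fun x hx => ((hS' x hx).continuousAt.div (hS x hx).continuousAt
      (hS_pos x hx).ne').continuousWithinAt)
    (fun x hx => hasDerivAt_div_of_harmonic (hS x (Ioo_subset_Icc_self hx))
      (hS' x (Ioo_subset_Icc_self hx)) (hS_pos x (Ioo_subset_Icc_self hx)).ne')

theorem pi_sq_div_sq_mul_integral_sq_le_of_lt (hab : a ≤ b)
    (hu : ContinuousOn u (Icc a b)) (hu' : ∀ x ∈ Ioo a b, HasDerivAt u (u' x) x)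
    (hu'2 : IntervalIntegrable (fun x => u' x ^ 2) volume a b) (ha : u a = 0) (hb : u b = 0)
    {L : ℝ} (hL : b - a < L) :
    π ^ 2 / L ^ 2 * ∫ x in a..b, u x ^ 2 ≤ ∫ x in a..b, u' x ^ 2 := by
  have hL0 : 0 < L := by linarith
  set c := π / L with hc
  set m := (a + b) / 2 with hm
  have hS (x : ℝ) : HasDerivAt (fun y => cos (c * (y - m))) (-c * sin (c * (x - m))) x := by
    simpa [mul_comm] using ((hasDerivAt_id x).sub_const m).const_mul c |>.cos
  have hS' (x : ℝ) :
      HasDerivAt (fun y => -c * sin (c * (y - m))) (-c ^ 2 * cos (c * (x - m))) x := by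
    simpa [mul_comm, pow_two, mul_assoc] using
      (((hasDerivAt_id x).sub_const m).const_mul c |>.sin).const_mul (-c)
  rw [← div_pow]
  refine mul_integral_sq_le_integral_sq_deriv_of_pos_harmonic hab hu hu' hu'2 ha hb
    (fun x _ => hS x) (fun x _ => hS' x) fun x hx => cos_pos_of_mem_Ioo ?_
  have hxm : |x - m| < L / 2 := by
    rw [abs_lt, hm]
    constructor <;> linarith [hx.1, hx.2]
  rw [mem_Ioo, ← abs_lt]
  calc |c * (x - m)| = c * |x - m| := by rw [abs_mul, abs_of_pos (by positivity)]
    _ < c * (L / 2) := by gcongr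
    _ = π / 2 := by rw [hc]; field_simp

end Picone

theorem stmt5 (a b : ℝ) (hab : a < b) (u : ℝ → ℝ) (hu : ContDiff ℝ 1 u)
    (ha : u a = 0) (hb : u b = 0) :
    Real.pi ^ 2 / (b - a) ^ 2 * ∫ x in a..b, (u x) ^ 2 ≤ ∫ x in a..b, (deriv u x) ^ 2 := by
  have hu' (x : ℝ) : HasDerivAt u (deriv u x) x := (hu.differentiable one_ne_zero x).hasDerivAt
  have hu'2 : IntervalIntegrable (fun x => deriv u x ^ 2) volume a b :=
    ((hu.continuous_deriv le_rfl).pow 2).intervalIntegrable a b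
  have hcont : ContinuousAt (fun L => π ^ 2 / L ^ 2 * ∫ x in a..b, u x ^ 2) (b - a) := by
    have : (b - a) ^ 2 ≠ 0 := by positivity
    fun_prop (disch := assumption)
  exact le_of_tendsto (hcont.tendsto.mono_left nhdsWithin_le_nhds)
    (eventually_nhdsWithin_of_forall (s := Ioi (b - a)) fun L hL =>
      pi_sq_div_sq_mul_integral_sq_le_of_lt hab.le hu.continuous.continuousOn (fun x _ => hu' x)
        hu'2 ha hb hL)
end

section
/- Let n ≥ 1 and L > 0 with L not an integer and n = ⌊L⌋+1, l = (L−n+1)/n. Among all choices of n disjoint closed intervals [a_i, b_i] ⊂ [0, L] with b_i + 1 ≤ a_{i+1}, the quantity Σ_{i=1}^n 1/(b_i − a_i)² is minimized when all intervals have the common length l, and the minimum value is n/l² = n³/(L−n+1)². -/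
/-!
The `n - 1` gaps of length at least `1` force the total length `S` of the intervals to be at
most `L - n + 1`. Cauchy–Schwarz in Engel form, applied twice, gives `n ^ 2 / S ≤ ∑ 1 / dᵢ` and
`(∑ 1 / dᵢ) ^ 2 / n ≤ ∑ 1 / dᵢ ^ 2` for the lengths `dᵢ > 0`, hence
`∑ 1 / dᵢ ^ 2 ≥ n ^ 3 / S ^ 2 ≥ n ^ 3 / (L - n + 1) ^ 2`, with equality for equal lengths.
-/

open Finset

section Lengths

variable {R : Type*} [Field R] [LinearOrder R] [IsStrictOrderedRing R]

theorem sum_sub_add_mul_le_of_gap {a b : ℕ → R} {g : R} (n : ℕ)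
    (hgap : ∀ i < n, b i + g ≤ a (i + 1)) :
    ∑ i ∈ range (n + 1), (b i - a i) + n * g ≤ b n - a 0 := by
  induction n with
  | zero => simp
  | succ n ih =>
    have hprev := ih fun i hi => hgap i (by omega)
    have hlast := hgap n (by omega)
    rw [sum_range_succ]
    push_cast
    linarith

theorem card_pow_three_div_sq_le_sum_inv_sq {ι : Type*} (s : Finset ι) {d : ι → R} {T : R}
    (hd : ∀ i ∈ s, 0 < d i) (hT : ∑ i ∈ s, d i ≤ T) :
    (#s : R) ^ 3 / T ^ 2 ≤ ∑ i ∈ s, 1 / d i ^ 2 := by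
  obtain rfl | hs := s.eq_empty_or_nonempty
  · simp
  have hS : 0 < ∑ i ∈ s, d i := sum_pos hd hs
  have hinv : (#s : R) ^ 2 / ∑ i ∈ s, d i ≤ ∑ i ∈ s, 1 / d i := by
    simpa using sq_sum_div_le_sum_sq_div s (fun _ => (1 : R)) hd
  have hsq : (∑ i ∈ s, 1 / d i) ^ 2 / #s ≤ ∑ i ∈ s, 1 / d i ^ 2 := by
    simpa using sq_sum_div_le_sum_sq_div s (fun i => 1 / d i) (g := fun _ => 1)
      fun _ _ => one_pos
  calc (#s : R) ^ 3 / T ^ 2 ≤ (#s : R) ^ 3 / (∑ i ∈ s, d i) ^ 2 := by gcongr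
    _ = ((#s : R) ^ 2 / ∑ i ∈ s, d i) ^ 2 / #s := by field_simp
    _ ≤ (∑ i ∈ s, 1 / d i) ^ 2 / #s := by gcongr
    _ ≤ ∑ i ∈ s, 1 / d i ^ 2 := hsq

end Lengths

theorem stmt17_general (L : ℝ)
    (n : ℕ) (l : ℝ) (hl : l = (L - n + 1) / n)
    (a b : ℕ → ℝ)
    (hab : ∀ i < n, a i < b i) (ha0 : ∀ i < n, 0 ≤ a i) (hbL : ∀ i < n, b i ≤ L)
    (hgap : ∀ i, i + 1 < n → b i + 1 ≤ a (i + 1)) :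
    (n : ℝ) ^ 3 / (L - n + 1) ^ 2 ≤ ∑ i ∈ Finset.range n, 1 / (b i - a i) ^ 2 ∧
      ((∀ i < n, b i - a i = l) →
        (∑ i ∈ Finset.range n, 1 / (b i - a i) ^ 2) = n / l ^ 2 ∧
          (n : ℝ) / l ^ 2 = (n : ℝ) ^ 3 / (L - n + 1) ^ 2) := by
  refine ⟨?_, fun hlen => ⟨?_, ?_⟩⟩
  · obtain _ | m := n
    · simp
    have htotal := sum_sub_add_mul_le_of_gap m fun i hi => hgap i (by omega)
    have hbound := card_pow_three_div_sq_le_sum_inv_sq (range (m + 1)) (T := L - (m + 1 : ℕ) + 1)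
      (fun i hi => sub_pos.2 (hab i (mem_range.1 hi)))
      (by push_cast; linarith [ha0 0 (by omega), hbL m (by omega)])
    simpa using hbound
  · rw [sum_congr rfl fun i hi => by rw [hlen i (mem_range.1 hi)], sum_const, card_range,
      nsmul_eq_mul]
    ring
  · rw [hl, div_pow, div_div_eq_mul_div]
    ring

theorem stmt17 (L : ℝ) (hL : 0 < L) (hLnotint : ¬ ∃ m : ℤ, L = m)
    (n : ℕ) (hn1 : 1 ≤ n) (hn : n = ⌊L⌋₊ + 1) (l : ℝ) (hl : l = (L - n + 1) / n)
    (a b : ℕ → ℝ)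
    (hab : ∀ i < n, a i < b i) (ha0 : ∀ i < n, 0 ≤ a i) (hbL : ∀ i < n, b i ≤ L)
    (hgap : ∀ i, i + 1 < n → b i + 1 ≤ a (i + 1)) :
    (n : ℝ) ^ 3 / (L - n + 1) ^ 2 ≤ ∑ i ∈ Finset.range n, 1 / (b i - a i) ^ 2 ∧
      ((∀ i < n, b i - a i = l) →
        (∑ i ∈ Finset.range n, 1 / (b i - a i) ^ 2) = n / l ^ 2 ∧
          (n : ℝ) / l ^ 2 = (n : ℝ) ^ 3 / (L - n + 1) ^ 2) :=
  stmt17_general L n l hl a b hab ha0 hbL hgap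
end
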